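/- For every y ∈ ℝ^d and t > 0: W(y,t) ⊆ { y − t·∇f(p) : p ∈ D⁺u_0(y) ∩ (0,∞)^d }. Consequently, if D⁻u_0(y) is nonempty then W(y,t) contains at most one point. Moreover, for any s > 0, any x ∈ ℝ^d and any maximizer y ∈ I(x,s), the vector ∇g((x−y)/s) belongs to D⁻(u(·,s))(x); in particular D⁻(u(·,s))(x) is nonempty for every x when s > 0. -/

import Mathlib

open Set Metric

noncomputable section

/-- `g(z) = c·(z₁⋯z_d)^{1/(d+1)}` (used only for `z ≥ 0`, where the product is `≥ 0`). -/
def gfun (c : ℝ) (d : ℕ) (z : Fin d → ℝ) : ℝ := c * (∏ i, z i) ^ (((d : ℝ) + 1)⁻¹)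

/-- The set of values over which the Hopf-Lax supremum is taken. -/
def hlSet (c : ℝ) (d : ℕ) (u0 : (Fin d → ℝ) → ℝ) (x : Fin d → ℝ) (t : ℝ) : Set ℝ :=
  (fun y => u0 y + t * gfun c d (t⁻¹ • (x - y))) '' {y | y ≤ x}

/-- The Hopf-Lax function `u(x,t)`, with `u(x,0) = u₀(x)`. -/
def hlu (c : ℝ) (d : ℕ) (u0 : (Fin d → ℝ) → ℝ) (x : Fin d → ℝ) (t : ℝ) : ℝ :=
  if t = 0 then u0 x else sSup (hlSet c d u0 x t)

/-- The set `I(x,t)` of maximizers in the Hopf-Lax formula. -/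
def hlI (c : ℝ) (d : ℕ) (u0 : (Fin d → ℝ) → ℝ) (x : Fin d → ℝ) (t : ℝ) :
    Set (Fin d → ℝ) :=
  {y | y ≤ x ∧ hlu c d u0 x t = u0 y + t * gfun c d (t⁻¹ • (x - y))}

/-- The forward set `W(y,t) = { x ≥ y : u(x,t) = u₀(y) + t g((x−y)/t) }`. -/
def hlW (c : ℝ) (d : ℕ) (u0 : (Fin d → ℝ) → ℝ) (y : Fin d → ℝ) (t : ℝ) :
    Set (Fin d → ℝ) :=
  {x | y ≤ x ∧ hlu c d u0 x t = u0 y + t * gfun c d (t⁻¹ • (x - y))}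

/-- The decay condition at `−∞`. -/
def DecayCond (d : ℕ) (u0 : (Fin d → ℝ) → ℝ) : Prop :=
  ∀ b : Fin d → ℝ, ∀ C : ℝ, ∃ M : ℝ, 0 < M ∧ ∀ y : Fin d → ℝ, y ≤ b → M ≤ ‖y‖ →
    u0 y ≤ -C * ‖y‖ ^ ((d : ℝ) / ((d : ℝ) + 1))

/-- The gradient of `g` at `z ∈ (0,∞)^d`: `(∇g(z))_i = (c/(d+1))·(z₁⋯z_d)^{1/(d+1)}/z_i`. -/
def gradg (c : ℝ) (d : ℕ) (z : Fin d → ℝ) : Fin d → ℝ :=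
  fun i => (c / ((d : ℝ) + 1)) * (∏ j, z j) ^ (((d : ℝ) + 1)⁻¹) / z i

/-- The gradient of the velocity `f(ρ) = κ (ρ₁⋯ρ_d)⁻¹` with `κ = (c/(d+1))^{d+1}`:
`(∇f(ρ))_i = −κ/((ρ₁⋯ρ_d) ρ_i)`. -/
def gradf (c : ℝ) (d : ℕ) (p : Fin d → ℝ) : Fin d → ℝ :=
  fun i => -((c / ((d : ℝ) + 1)) ^ (d + 1)) / ((∏ j, p j) * p i)

/-- The subdifferential `D⁻v(x)`. -/
def subdiff (d : ℕ) (v : (Fin d → ℝ) → ℝ) (x : Fin d → ℝ) : Set (Fin d → ℝ) :=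
  {q | ∀ ε > (0 : ℝ), ∃ δ > (0 : ℝ), ∀ y : Fin d → ℝ, ‖y - x‖ < δ →
    -(ε * ‖y - x‖) ≤ v y - v x - ∑ i, q i * (y i - x i)}

/-- The superdifferential `D⁺v(x)`. -/
def superdiff (d : ℕ) (v : (Fin d → ℝ) → ℝ) (x : Fin d → ℝ) : Set (Fin d → ℝ) :=
  {p | ∀ ε > (0 : ℝ), ∃ δ > (0 : ℝ), ∀ y : Fin d → ℝ, ‖y - x‖ < δ →
    v y - v x - ∑ i, p i * (y i - x i) ≤ ε * ‖y - x‖}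

/-! The Hopf–Lax supremum is attained, because the decay of `u₀` at `−∞` beats the growth
`t g((x−y)/t) ≤ C |y|^{d/(d+1)}`. A maximizer `y ∈ I(x,t)` lies strictly below `x`: on a face
`y_i = x_i` the term `g` vanishes, and lowering `y` by `ε` gains order `ε^{d/(d+1)}` while the
Lipschitz loss is only `O(ε)`. Hence `g` is smooth at `(x−y)/t`, and the smooth functions
`y' ↦ u(x,t) − t g((x−y')/t)` and `x' ↦ u₀(y) + t g((x'−y)/t)` touch `u₀` from above at `y` and
`u(·,t)` from below at `x`. Both have gradient `p = ∇g((x−y)/t)`, so `p ∈ D⁺u₀(y)` and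
`p ∈ D⁻u(·,t)(x)`. Since `∇f(∇g(z)) = −z`, this gives `x = y − t∇f(p)`; and an element of `D⁻u₀(y)`
equals every element of `D⁺u₀(y)`, so then `x` is determined by `y`. -/

open Filter Topology

def hlValue (c : ℝ) (d : ℕ) (u0 : (Fin d → ℝ) → ℝ) (x : Fin d → ℝ) (t : ℝ) (y : Fin d → ℝ) : ℝ :=
  u0 y + t * gfun c d (t⁻¹ • (x - y))

def dotCLM {d : ℕ} (q : Fin d → ℝ) : (Fin d → ℝ) →L[ℝ] ℝ :=
  ∑ i, q i • ContinuousLinearMap.proj i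

@[simp]
lemma dotCLM_apply {d : ℕ} (q v : Fin d → ℝ) : dotCLM q v = ∑ i, q i * v i := by
  simp [dotCLM]

lemma eventually_ge_of_forall_lt {d : ℕ} {a b : Fin d → ℝ} (h : ∀ i, a i < b i) :
    ∀ᶠ x in 𝓝 b, a ≤ x :=
  (eventually_all.2 fun i => (continuous_apply i).continuousAt.eventually (lt_mem_nhds (h i))).mono
    fun _ hx i => (hx i).le

lemma eventually_le_of_forall_lt {d : ℕ} {a b : Fin d → ℝ} (h : ∀ i, a i < b i) :
    ∀ᶠ x in 𝓝 a, x ≤ b :=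
  (eventually_all.2 fun i => (continuous_apply i).continuousAt.eventually (gt_mem_nhds (h i))).mono
    fun _ hx i => (hx i).le

lemma eventually_mul_lt_mul_rpow {r : ℝ} (hr : r < 1) {a : ℝ} (ha : 0 < a) (K : ℝ) :
    ∀ᶠ ε in 𝓝[>] (0 : ℝ), K * ε < a * ε ^ r := by
  filter_upwards [(tendsto_rpow_neg_nhdsGT_zero (sub_neg.2 hr)).eventually_gt_atTop (K / a),
    self_mem_nhdsWithin] with ε hK (hε : 0 < ε)
  rw [div_lt_iff₀ ha, Real.rpow_sub_one hε.ne'] at hK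
  calc K * ε < ε ^ r / ε * a * ε := mul_lt_mul_of_pos_right hK hε
    _ = a * ε ^ r := by field_simp

section SubSuperdiff

variable {d : ℕ} {v φ : (Fin d → ℝ) → ℝ} {x p q : Fin d → ℝ}

lemma HasFDerivAt.exists_abs_sub_dot_le (h : HasFDerivAt v (dotCLM q) x) {ε : ℝ} (hε : 0 < ε) :
    ∃ δ > 0, ∀ y, ‖y - x‖ < δ → |v y - v x - ∑ i, q i * (y i - x i)| ≤ ε * ‖y - x‖ := by
  obtain ⟨δ, hδ, hball⟩ := Metric.eventually_nhds_iff.1 (h.isLittleO.def hε)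
  exact ⟨δ, hδ, fun y hy => by simpa [dist_eq_norm] using hball (y := y) (by rwa [dist_eq_norm])⟩

lemma mem_subdiff_of_hasFDerivAt (h : HasFDerivAt v (dotCLM q) x) : q ∈ subdiff d v x :=
  fun _ hε =>
    let ⟨δ, hδ, hb⟩ := h.exists_abs_sub_dot_le hε
    ⟨δ, hδ, fun y hy => (abs_le.1 (hb y hy)).1⟩

lemma mem_superdiff_of_hasFDerivAt (h : HasFDerivAt v (dotCLM q) x) : q ∈ superdiff d v x :=
  fun _ hε =>
    let ⟨δ, hδ, hb⟩ := h.exists_abs_sub_dot_le hε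
    ⟨δ, hδ, fun y hy => (abs_le.1 (hb y hy)).2⟩

lemma mem_subdiff_of_eventually_le (hle : ∀ᶠ y in 𝓝 x, φ y ≤ v y) (heq : φ x = v x)
    (hq : q ∈ subdiff d φ x) : q ∈ subdiff d v x := by
  intro ε hε
  obtain ⟨δ, hδ, hφ⟩ := hq ε hε
  obtain ⟨δ', hδ', hle'⟩ := Metric.eventually_nhds_iff.1 hle
  refine ⟨min δ δ', lt_min hδ hδ', fun y hy => ?_⟩
  have h1 := hφ y (hy.trans_le (min_le_left _ _))
  have h2 := @hle' y (by rw [dist_eq_norm]; exact hy.trans_le (min_le_right _ _))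
  linarith

lemma mem_superdiff_of_eventually_le (hle : ∀ᶠ y in 𝓝 x, v y ≤ φ y) (heq : v x = φ x)
    (hp : p ∈ superdiff d φ x) : p ∈ superdiff d v x := by
  intro ε hε
  obtain ⟨δ, hδ, hφ⟩ := hp ε hε
  obtain ⟨δ', hδ', hle'⟩ := Metric.eventually_nhds_iff.1 hle
  refine ⟨min δ δ', lt_min hδ hδ', fun y hy => ?_⟩
  have h1 := hφ y (hy.trans_le (min_le_left _ _))
  have h2 := @hle' y (by rw [dist_eq_norm]; exact hy.trans_le (min_le_right _ _))
  linarith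

lemma dotProduct_sub_nonpos_of_mem_subdiff_of_mem_superdiff (hq : q ∈ subdiff d v x)
    (hp : p ∈ superdiff d v x) (w : Fin d → ℝ) : (q - p) ⬝ᵥ w ≤ 0 := by
  by_contra! hpos
  set X := (q - p) ⬝ᵥ w
  have hw : 0 < ‖w‖ + 1 := by positivity
  set ε := X / (4 * (‖w‖ + 1))
  have hε : 0 < ε := by positivity
  obtain ⟨δ₁, hδ₁, hsub⟩ := hq ε hε
  obtain ⟨δ₂, hδ₂, hsup⟩ := hp ε hε
  set h := min δ₁ δ₂ / (2 * (‖w‖ + 1))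
  have hh : 0 < h := by positivity
  have hstep : ‖(x + h • w) - x‖ = h * ‖w‖ := by
    rw [add_sub_cancel_left, norm_smul, Real.norm_of_nonneg hh.le]
  have hsmall : h * ‖w‖ < min δ₁ δ₂ := by
    have : h * (2 * (‖w‖ + 1)) = min δ₁ δ₂ := div_mul_cancel₀ _ (by positivity)
    nlinarith [norm_nonneg w, lt_min hδ₁ hδ₂]
  have e₁ := hsub (x + h • w) (hstep ▸ hsmall.trans_le (min_le_left _ _))
  have e₂ := hsup (x + h • w) (hstep ▸ hsmall.trans_le (min_le_right _ _))
  have hdot : ∀ r : Fin d → ℝ, ∑ i, r i * ((x + h • w) i - x i) = h * (r ⬝ᵥ w) := fun r => by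
    simp [dotProduct, Finset.mul_sum, mul_left_comm]
  rw [hstep, hdot] at e₁ e₂
  have hX : X = q ⬝ᵥ w - p ⬝ᵥ w := sub_dotProduct q p w
  have h2ε : 2 * ε * ‖w‖ < X := by
    have : 2 * ε * ‖w‖ = X * (‖w‖ / (2 * (‖w‖ + 1))) := by simp only [ε]; field_simp; ring
    rw [this]
    exact mul_lt_of_lt_one_right hpos ((div_lt_one (by positivity)).2 (by linarith [norm_nonneg w]))
  nlinarith

lemma eq_of_mem_subdiff_of_mem_superdiff (hq : q ∈ subdiff d v x) (hp : p ∈ superdiff d v x) :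
    q = p :=
  sub_eq_zero.1 <| dotProduct_self_eq_zero.1 <|
    le_antisymm (dotProduct_sub_nonpos_of_mem_subdiff_of_mem_superdiff hq hp _)
      (Finset.sum_nonneg fun _ _ => mul_self_nonneg _)

end SubSuperdiff

section Gfun

variable {c : ℝ} {d : ℕ}

lemma pow_rpow_inv_add_one {a : ℝ} (ha : 0 ≤ a) :
    (a ^ d) ^ ((d : ℝ) + 1)⁻¹ = a ^ ((d : ℝ) / ((d : ℝ) + 1)) := by
  rw [← Real.rpow_natCast, ← Real.rpow_mul ha, div_eq_mul_inv]

lemma continuous_gfun : Continuous (gfun c d) :=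
  continuous_const.mul <| (continuous_finsetProd _ fun i _ => continuous_apply i).rpow_const
    fun _ => Or.inr (by positivity)

lemma gfun_eq_zero {z : Fin d → ℝ} {i : Fin d} (hi : z i = 0) : gfun c d z = 0 := by
  rw [gfun, Finset.prod_eq_zero (Finset.mem_univ i) hi, Real.zero_rpow (by positivity), mul_zero]

lemma gfun_le_gfun (hc : 0 ≤ c) {z w : Fin d → ℝ} (hz : 0 ≤ z) (hzw : z ≤ w) :
    gfun c d z ≤ gfun c d w :=
  mul_le_mul_of_nonneg_left (Real.rpow_le_rpow (Finset.prod_nonneg fun i _ => hz i)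
    (Finset.prod_le_prod (fun i _ => hz i) fun i _ => hzw i) (by positivity)) hc

lemma gfun_const {a : ℝ} (ha : 0 ≤ a) :
    gfun c d (fun _ => a) = c * a ^ ((d : ℝ) / ((d : ℝ) + 1)) := by
  rw [gfun, Finset.prod_const, Finset.card_univ, Fintype.card_fin, pow_rpow_inv_add_one ha]

lemma gfun_le_mul_norm_rpow (hc : 0 ≤ c) {z : Fin d → ℝ} (hz : 0 ≤ z) :
    gfun c d z ≤ c * ‖z‖ ^ ((d : ℝ) / ((d : ℝ) + 1)) :=
  (gfun_le_gfun hc hz fun i => (le_abs_self _).trans (norm_le_pi_norm z i)).trans_eq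
    (gfun_const (norm_nonneg z))

lemma gfun_smul {a : ℝ} (ha : 0 ≤ a) {z : Fin d → ℝ} (hz : 0 ≤ z) :
    gfun c d (a • z) = a ^ ((d : ℝ) / ((d : ℝ) + 1)) * gfun c d z := by
  simp only [gfun, Pi.smul_apply, smul_eq_mul, Finset.prod_mul_distrib, Finset.prod_const,
    Finset.card_univ, Fintype.card_fin]
  rw [Real.mul_rpow (by positivity) (Finset.prod_nonneg fun i _ => hz i), pow_rpow_inv_add_one ha]
  ring

lemma mul_gfun_inv_smul {t : ℝ} (ht : 0 < t) {z : Fin d → ℝ} (hz : 0 ≤ z) :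
    t * gfun c d (t⁻¹ • z) = t ^ ((d : ℝ) + 1)⁻¹ * gfun c d z := by
  have hexp : ((d : ℝ) + 1)⁻¹ = 1 - (d : ℝ) / ((d : ℝ) + 1) := by field_simp; ring
  rw [gfun_smul (inv_nonneg.2 ht.le) hz, Real.inv_rpow ht.le, hexp, Real.rpow_sub ht,
    Real.rpow_one]
  ring

lemma hasFDerivAt_gfun {z : Fin d → ℝ} (hz : ∀ i, 0 < z i) :
    HasFDerivAt (gfun c d) (dotCLM (gradg c d z)) z := by
  have hP : 0 < ∏ i, z i := Finset.prod_pos fun i _ => hz i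
  have h := ((hasFDerivAt_finsetProd (u := Finset.univ) (x := z)).rpow_const
    (p := ((d : ℝ) + 1)⁻¹) (Or.inl hP.ne')).const_mul c
  refine h.congr_fderiv ?_
  ext v
  have herase : ∀ i, ∏ j ∈ Finset.univ.erase i, z j = (∏ j, z j) / z i := fun i =>
    (eq_div_iff (hz i).ne').2 (Finset.prod_erase_mul _ _ (Finset.mem_univ i))
  simp only [smul_apply, sum_apply, ContinuousLinearMap.proj_apply, smul_eq_mul, herase,
    Real.rpow_sub_one hP.ne', Finset.mul_sum, dotCLM_apply, gradg]
  refine Finset.sum_congr rfl fun i _ => ?_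
  have := (hz i).ne'
  field_simp

lemma hasFDerivAt_mul_gfun_inv_smul {t : ℝ} (ht : t ≠ 0) {w : Fin d → ℝ}
    (hw : ∀ i, 0 < (t⁻¹ • w) i) :
    HasFDerivAt (fun w => t * gfun c d (t⁻¹ • w)) (dotCLM (gradg c d (t⁻¹ • w))) w := by
  have h := ((hasFDerivAt_gfun (c := c) hw).comp w ((hasFDerivAt_id w).const_smul t⁻¹)).const_mul t
  refine h.congr_fderiv ?_
  ext v
  simp [smul_smul, mul_inv_cancel₀ ht]

lemma gradg_pos (hc : 0 < c) {z : Fin d → ℝ} (hz : ∀ i, 0 < z i) (i : Fin d) :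
    0 < gradg c d z i := by
  have := Real.rpow_pos_of_pos (Finset.prod_pos (s := Finset.univ) fun j _ => hz j) ((d : ℝ) + 1)⁻¹
  have := hz i
  unfold gradg
  positivity

lemma gradf_gradg (hc : c ≠ 0) {z : Fin d → ℝ} (hz : ∀ i, 0 < z i) :
    gradf c d (gradg c d z) = -z := by
  set a := c / ((d : ℝ) + 1)
  set P := ∏ j, z j
  have hP : 0 < P := Finset.prod_pos fun j _ => hz j
  set G := a * P ^ ((d : ℝ) + 1)⁻¹
  have hprod : ∏ j, gradg c d z j = G ^ d / P := by
    simp only [gradg, Finset.prod_div_distrib, Finset.prod_const, Finset.card_univ,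
      Fintype.card_fin, G, a, P]
  have hG : G ^ (d + 1) = a ^ (d + 1) * P := by
    rw [mul_pow, ← Real.rpow_natCast (P ^ _), ← Real.rpow_mul hP.le, Nat.cast_succ,
      inv_mul_cancel₀ (by positivity), Real.rpow_one]
  have ha : a ≠ 0 := div_ne_zero hc (by positivity)
  funext i
  have := (hz i).ne'
  show -(a ^ (d + 1)) / ((∏ j, gradg c d z j) * (G / z i)) = -z i
  rw [hprod, div_mul_div_comm, ← pow_succ, hG]
  field_simp

lemma sub_smul_gradf_gradg_inv_smul_sub (hc : c ≠ 0) {t : ℝ} (ht : t ≠ 0) {x y : Fin d → ℝ}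
    (hz : ∀ i, 0 < (t⁻¹ • (x - y)) i) : y - t • gradf c d (gradg c d (t⁻¹ • (x - y))) = x := by
  rw [gradf_gradg hc hz, smul_neg, sub_neg_eq_add, smul_smul, mul_inv_cancel₀ ht, one_smul,
    add_sub_cancel]

end Gfun

section HopfLax

variable {c : ℝ} {d : ℕ} {u0 : (Fin d → ℝ) → ℝ} {x y : Fin d → ℝ} {t : ℝ}

lemma hlValue_eq_of_le (ht : 0 < t) (hyx : y ≤ x) :
    hlValue c d u0 x t y = u0 y + t ^ ((d : ℝ) + 1)⁻¹ * gfun c d (x - y) := by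
  rw [hlValue, mul_gfun_inv_smul ht (sub_nonneg.2 hyx)]

lemma continuous_hlValue (hu0 : Continuous u0) : Continuous (hlValue c d u0 x t) :=
  hu0.add <| continuous_const.mul <| continuous_gfun.comp (by fun_prop)

lemma tendsto_hlValue_atBot (hc : 0 ≤ c) (hdecay : DecayCond d u0) (ht : 0 < t) :
    Tendsto (hlValue c d u0 x t) (cocompact _ ⊓ 𝓟 (Iic x)) atBot := by
  set r := (d : ℝ) / ((d : ℝ) + 1) with hr
  set T := t ^ ((d : ℝ) + 1)⁻¹ with hT
  rw [tendsto_atBot]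
  intro B
  obtain ⟨M, -, hM⟩ := hdecay x (T * c * 2 ^ r + |B| + 1)
  rw [← hr] at hM
  have hfar : ∀ᶠ y : Fin d → ℝ in cocompact _, max M (max ‖x‖ 1) ≤ ‖y‖ :=
    tendsto_norm_cocompact_atTop.eventually_ge_atTop _
  filter_upwards [hfar.filter_mono inf_le_left, mem_inf_of_right (mem_principal_self _)]
    with y hy (hyx : y ≤ x)
  obtain ⟨hMy, hxy, h1y⟩ : M ≤ ‖y‖ ∧ ‖x‖ ≤ ‖y‖ ∧ 1 ≤ ‖y‖ := by simpa using hy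
  have hg : gfun c d (x - y) ≤ c * 2 ^ r * ‖y‖ ^ r :=
    calc gfun c d (x - y) ≤ c * ‖x - y‖ ^ r := gfun_le_mul_norm_rpow hc (sub_nonneg.2 hyx)
      _ ≤ c * (2 * ‖y‖) ^ r := by
          gcongr
          linarith [norm_sub_le x y]
      _ = c * 2 ^ r * ‖y‖ ^ r := by rw [Real.mul_rpow zero_le_two (norm_nonneg _)]; ring
  have hyr : 1 ≤ ‖y‖ ^ r := Real.one_le_rpow h1y (by positivity)
  rw [hlValue_eq_of_le ht hyx, ← hT]
  have hB : |B| + 1 ≤ (|B| + 1) * ‖y‖ ^ r := le_mul_of_one_le_right (by positivity) hyr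
  nlinarith [hM y hyx hMy, mul_le_mul_of_nonneg_left hg (by positivity : 0 ≤ T), neg_abs_le B]

lemma exists_isMaxOn_hlValue (hc : 0 ≤ c) (hu0 : Continuous u0) (hdecay : DecayCond d u0)
    (ht : 0 < t) : ∃ y ∈ Iic x, IsMaxOn (hlValue c d u0 x t) (Iic x) y :=
  (continuous_hlValue hu0).continuousOn.exists_isMaxOn' isClosed_Iic (self_mem_Iic (a := x))
    ((tendsto_hlValue_atBot hc hdecay ht).eventually_le_atBot _)

lemma hlu_eq_of_isMaxOn (ht : t ≠ 0) (hy : y ∈ Iic x)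
    (hmax : IsMaxOn (hlValue c d u0 x t) (Iic x) y) :
    hlu c d u0 x t = hlValue c d u0 x t y := by
  rw [hlu, if_neg ht]
  exact IsGreatest.csSup_eq ⟨mem_image_of_mem _ hy, forall_mem_image.2 hmax⟩

lemma nonempty_hlI (hc : 0 ≤ c) (hu0 : Continuous u0) (hdecay : DecayCond d u0) (ht : 0 < t) :
    (hlI c d u0 x t).Nonempty :=
  let ⟨y, hy, hmax⟩ := exists_isMaxOn_hlValue hc hu0 hdecay ht
  ⟨y, hy, hlu_eq_of_isMaxOn ht.ne' hy hmax⟩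

lemma hlValue_le_hlu (hc : 0 ≤ c) (hu0 : Continuous u0) (hdecay : DecayCond d u0) (ht : 0 < t)
    (hyx : y ≤ x) : hlValue c d u0 x t y ≤ hlu c d u0 x t := by
  obtain ⟨y₀, hy₀, hmax⟩ := exists_isMaxOn_hlValue hc hu0 hdecay ht
  exact (hlu_eq_of_isMaxOn ht.ne' hy₀ hmax).symm ▸ hmax hyx

lemma lt_of_mem_hlI (hc : 0 < c) (hlip : LocallyLipschitz u0) (hdecay : DecayCond d u0)
    (ht : 0 < t) (hy : y ∈ hlI c d u0 x t) (i : Fin d) : y i < x i := by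
  by_contra! hxy
  have hval : hlu c d u0 x t = u0 y := by
    rw [hy.2, gfun_eq_zero (i := i) (by simp [le_antisymm (hy.1 i) hxy]), mul_zero, add_zero]
  obtain ⟨K, s, hs, hK⟩ := hlip y
  have hshift : Tendsto (fun ε : ℝ => y - fun _ => ε) (𝓝[>] 0) (𝓝 y) :=
    ((continuous_const.sub (continuous_pi fun _ => continuous_id)).tendsto' 0 y
      (by simp [← Pi.zero_def])).mono_left nhdsWithin_le_nhds
  have hr : (d : ℝ) / ((d : ℝ) + 1) < 1 := (div_lt_one (by positivity)).2 (by linarith)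
  obtain ⟨ε, (hε : 0 < ε), hεs, hgain⟩ := (eventually_mem_nhdsWithin.and ((hshift.eventually hs).and
    (eventually_mul_lt_mul_rpow hr (by positivity : 0 < t ^ ((d : ℝ) + 1)⁻¹ * c) K))).exists
  set y' : Fin d → ℝ := y - fun _ => ε
  have hεle : (fun _ => ε) ≤ x - y' := fun j => by
    simp only [y', Pi.sub_apply]
    linarith [hy.1 j]
  have hy'x : y' ≤ x := fun j => by linarith [hεle j, show (x - y') j = x j - y' j from rfl]
  have hloss : u0 y - u0 y' ≤ K * ε :=
    calc u0 y - u0 y' ≤ dist (u0 y) (u0 y') := (le_abs_self _).trans (Real.dist_eq _ _).ge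
      _ ≤ K * dist y y' := hK.dist_le_mul y (mem_of_mem_nhds hs) y' hεs
      _ ≤ K * ε := by
          gcongr
          simpa [y', dist_eq_norm, abs_of_pos hε] using pi_norm_const_le (ι := Fin d) ε
  have hup := hlValue_le_hlu hc.le hlip.continuous hdecay ht hy'x
  rw [hlValue_eq_of_le ht hy'x, hval] at hup
  have hmono := mul_le_mul_of_nonneg_left (gfun_le_gfun hc.le (fun _ => hε.le) hεle)
    (by positivity : 0 ≤ t ^ ((d : ℝ) + 1)⁻¹)
  rw [gfun_const hε.le] at hmono
  linarith

lemma inv_smul_sub_pos_of_mem_hlI (hc : 0 < c) (hlip : LocallyLipschitz u0)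
    (hdecay : DecayCond d u0) (ht : 0 < t) (hy : y ∈ hlI c d u0 x t) (i : Fin d) :
    0 < (t⁻¹ • (x - y)) i := by
  simpa using mul_pos (inv_pos.2 ht) (sub_pos.2 (lt_of_mem_hlI hc hlip hdecay ht hy i))

lemma gradg_mem_superdiff (hc : 0 < c) (hlip : LocallyLipschitz u0) (hdecay : DecayCond d u0)
    (ht : 0 < t) (hy : y ∈ hlI c d u0 x t) :
    gradg c d (t⁻¹ • (x - y)) ∈ superdiff d u0 y := by
  have hlt := lt_of_mem_hlI hc hlip hdecay ht hy
  have hz := inv_smul_sub_pos_of_mem_hlI hc hlip hdecay ht hy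
  have hφ : HasFDerivAt (fun y' => hlu c d u0 x t - t * gfun c d (t⁻¹ • (x - y')))
      (dotCLM (gradg c d (t⁻¹ • (x - y)))) y := by
    refine ((hasFDerivAt_const _ y).sub ((hasFDerivAt_mul_gfun_inv_smul ht.ne' hz).comp y
      ((hasFDerivAt_id y).const_sub x))).congr_fderiv ?_
    ext v
    simp
  refine mem_superdiff_of_eventually_le ?_ ?_ (mem_superdiff_of_hasFDerivAt hφ)
  · filter_upwards [eventually_le_of_forall_lt hlt] with y' hy'x
    have := hlValue_le_hlu hc.le hlip.continuous hdecay ht hy'x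
    rw [hlValue] at this
    linarith
  · rw [hy.2]
    ring

lemma gradg_mem_subdiff_hlu (hc : 0 < c) (hlip : LocallyLipschitz u0) (hdecay : DecayCond d u0)
    (ht : 0 < t) (hy : y ∈ hlI c d u0 x t) :
    gradg c d (t⁻¹ • (x - y)) ∈ subdiff d (fun z => hlu c d u0 z t) x := by
  have hlt := lt_of_mem_hlI hc hlip hdecay ht hy
  have hz := inv_smul_sub_pos_of_mem_hlI hc hlip hdecay ht hy
  have hφ : HasFDerivAt (fun x' => hlValue c d u0 x' t y)
      (dotCLM (gradg c d (t⁻¹ • (x - y)))) x := by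
    refine (((hasFDerivAt_mul_gfun_inv_smul (c := c) ht.ne' hz).comp x
      ((hasFDerivAt_id x).sub_const y)).const_add (u0 y)).congr_fderiv ?_
    ext
    simp
  refine mem_subdiff_of_eventually_le ?_ hy.2.symm (mem_subdiff_of_hasFDerivAt hφ)
  filter_upwards [eventually_ge_of_forall_lt hlt] with x' hyx'
  exact hlValue_le_hlu hc.le hlip.continuous hdecay ht hyx'

end HopfLax

theorem hlW_subset_and_subdiff_general
    (d : ℕ) (c : ℝ) (hc : 0 < c)
    (u0 : (Fin d → ℝ) → ℝ) (hlip : LocallyLipschitz u0)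
    (hdecay : DecayCond d u0) :
    (∀ (y : Fin d → ℝ) (t : ℝ), 0 < t →
        hlW c d u0 y t ⊆
          {x | ∃ p ∈ superdiff d u0 y, (∀ i, 0 < p i) ∧ x = y - t • gradf c d p}) ∧
    (∀ (y : Fin d → ℝ) (t : ℝ), 0 < t → (subdiff d u0 y).Nonempty →
        (hlW c d u0 y t).Subsingleton) ∧
    (∀ (s : ℝ), 0 < s → ∀ (x : Fin d → ℝ), ∀ y ∈ hlI c d u0 x s,
        gradg c d (s⁻¹ • (x - y)) ∈ subdiff d (fun z => hlu c d u0 z s) x) ∧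
    (∀ (s : ℝ), 0 < s → ∀ (x : Fin d → ℝ),
        (subdiff d (fun z => hlu c d u0 z s) x).Nonempty) := by
  have hW : ∀ (y : Fin d → ℝ) (t : ℝ), 0 < t → hlW c d u0 y t ⊆
      {x | ∃ p ∈ superdiff d u0 y, (∀ i, 0 < p i) ∧ x = y - t • gradf c d p} := by
    intro y t ht x (hx : y ∈ hlI c d u0 x t)
    have hz := inv_smul_sub_pos_of_mem_hlI hc hlip hdecay ht hx
    exact ⟨_, gradg_mem_superdiff hc hlip hdecay ht hx, gradg_pos hc hz,
      (sub_smul_gradf_gradg_inv_smul_sub hc.ne' ht.ne' hz).symm⟩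
  refine ⟨hW, ?_, fun s hs x y hy => gradg_mem_subdiff_hlu hc hlip hdecay hs hy, fun s hs x => ?_⟩
  · rintro y t ht ⟨q, hq⟩ x₁ hx₁ x₂ hx₂
    obtain ⟨p₁, hp₁, -, rfl⟩ := hW y t ht hx₁
    obtain ⟨p₂, hp₂, -, rfl⟩ := hW y t ht hx₂
    rw [← eq_of_mem_subdiff_of_mem_superdiff hq hp₁, ← eq_of_mem_subdiff_of_mem_superdiff hq hp₂]
  · obtain ⟨y, hy⟩ := nonempty_hlI (x := x) hc.le hlip.continuous hdecay hs
    exact ⟨_, gradg_mem_subdiff_hlu hc hlip hdecay hs hy⟩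

/-- (a) `W(y,t) ⊆ { y − t∇f(p) : p ∈ D⁺u₀(y) ∩ (0,∞)^d }`; consequently if `D⁻u₀(y) ≠ ∅`
then `W(y,t)` has at most one point. (b) For `s > 0` and any maximizer `y ∈ I(x,s)`,
`∇g((x−y)/s) ∈ D⁻(u(·,s))(x)`; in particular `D⁻(u(·,s))(x)` is nonempty for all `x`. -/
theorem hlW_subset_and_subdiff
    (d : ℕ) (hd : 1 ≤ d) (c : ℝ) (hc : 0 < c)
    (u0 : (Fin d → ℝ) → ℝ) (hmono : Monotone u0) (hlip : LocallyLipschitz u0)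
    (hdecay : DecayCond d u0) :
    (∀ (y : Fin d → ℝ) (t : ℝ), 0 < t →
        hlW c d u0 y t ⊆
          {x | ∃ p ∈ superdiff d u0 y, (∀ i, 0 < p i) ∧ x = y - t • gradf c d p}) ∧
    (∀ (y : Fin d → ℝ) (t : ℝ), 0 < t → (subdiff d u0 y).Nonempty →
        (hlW c d u0 y t).Subsingleton) ∧
    (∀ (s : ℝ), 0 < s → ∀ (x : Fin d → ℝ), ∀ y ∈ hlI c d u0 x s,
        gradg c d (s⁻¹ • (x - y)) ∈ subdiff d (fun z => hlu c d u0 z s) x) ∧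
    (∀ (s : ℝ), 0 < s → ∀ (x : Fin d → ℝ),
        (subdiff d (fun z => hlu c d u0 z s) x).Nonempty) :=
  hlW_subset_and_subdiff_general d c hc u0 hlip hdecay
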